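/- Let n₁, n₂, r ≥ 1 and n₃ ≥ 1, and let A : Fin n₁ → Fin n₂ → ZMod n₃ → ℂ. Then the following are equivalent: (1) there exist X : Fin n₁ → Fin r → ZMod n₃ → ℂ and Y : Fin r → Fin n₂ → ZMod n₃ → ℂ with A = X * Y; (2) for every k ∈ ZMod n₃, the n₁ × n₂ complex matrix (i, j) ↦ Â i j k has rank at most r. In other words, a tensor admits a t-product factorization with inner tubal dimension r if and only if every Fourier-domain frontal slice has rank at most r. -/

import Mathlib

/-!
The mode-3 DFT acts tube by tube as `ZMod.dft`, which is a bijection and turns circular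
convolution into pointwise multiplication. Hence it turns the t-product into slice-wise matrix
multiplication, and `A = X * Y` with inner dimension `r` holds iff every Fourier slice of `A` is a
product of an `n₁ × r` and an `r × n₂` matrix, i.e. has rank at most `r`.
-/

open Finset Matrix

/-- Mode-3 discrete Fourier transform of a third-order tensor. -/
noncomputable def dft3 {n₁ n₂ n₃ : ℕ} [NeZero n₃]
    (A : Fin n₁ → Fin n₂ → ZMod n₃ → ℂ) : Fin n₁ → Fin n₂ → ZMod n₃ → ℂ :=
  fun i j k => ∑ m : ZMod n₃,
    A i j m * Complex.exp (-(2 * (Real.pi : ℂ) * Complex.I *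
      ((k.val : ℂ) * (m.val : ℂ))) / (n₃ : ℂ))

/-- The t-product: matrix multiplication combined with circular convolution
along the third mode. -/
noncomputable def tProd3 {n₁ r n₂ n₃ : ℕ} [NeZero n₃]
    (X : Fin n₁ → Fin r → ZMod n₃ → ℂ) (Y : Fin r → Fin n₂ → ZMod n₃ → ℂ) :
    Fin n₁ → Fin n₂ → ZMod n₃ → ℂ :=
  fun i j k => ∑ l : Fin r, ∑ m : ZMod n₃, X i l m * Y l j (k - m)

-- Map `K^r` onto the column space of `B` and lift `B` through that surjection.
theorem Matrix.rank_le_iff_exists_mul_eq {K m n : Type*} [Field K] [Fintype n] [DecidableEq n]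
    (B : Matrix m n K) (r : ℕ) :
    B.rank ≤ r ↔ ∃ (P : Matrix m (Fin r) K) (Q : Matrix (Fin r) n K), P * Q = B := by
  constructor
  · intro h
    set W := LinearMap.range B.mulVecLin
    let π : (Fin r → K) →ₗ[K] W :=
      (Module.finBasis K W).equivFun.symm.toLinearMap ∘ₗ LinearMap.funLeft K K (Fin.castLE h)
    have hπ : Function.Surjective π := by
      simp only [π, LinearMap.coe_comp]
      exact (LinearEquiv.surjective _).comp
        (LinearMap.funLeft_surjective_of_injective _ _ _ (Fin.castLE_injective h))
    obtain ⟨σ, hσ⟩ := Module.projective_lifting_property π B.mulVecLin.rangeRestrict hπ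
    refine ⟨LinearMap.toMatrix' (W.subtype ∘ₗ π), LinearMap.toMatrix' σ, ?_⟩
    rw [← LinearMap.toMatrix'_comp, LinearMap.comp_assoc, hσ, LinearMap.subtype_comp_codRestrict,
      ← Matrix.toLin'_apply', LinearMap.toMatrix'_toLin']
  · rintro ⟨P, Q, rfl⟩
    exact (rank_mul_le_left P Q).trans ((rank_le_card_width P).trans_eq (Fintype.card_fin r))

namespace ZMod

theorem dft_convolution {N : ℕ} [NeZero N] (x y : ZMod N → ℂ) (k : ZMod N) :
    𝓕 (fun s ↦ ∑ m, x m * y (s - m)) k = 𝓕 x k * 𝓕 y k := by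
  simp only [dft_apply, smul_eq_mul]
  rw [Finset.sum_mul_sum]
  simp only [Finset.mul_sum]
  rw [Finset.sum_comm]
  refine Finset.sum_congr rfl fun m _ ↦ Fintype.sum_equiv (Equiv.subRight m) _ _ fun s ↦ ?_
  rw [Equiv.subRight_apply, show -(s * k) = -(m * k) + -((s - m) * k) by ring,
    AddChar.map_add_eq_mul]
  ring

end ZMod

open ZMod

section Fourier

variable {n₁ n₂ r n₃ : ℕ} [NeZero n₃]

theorem dft3_apply (A : Fin n₁ → Fin n₂ → ZMod n₃ → ℂ) (i : Fin n₁) (j : Fin n₂) :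
    dft3 A i j = 𝓕 (A i j) := by
  ext k
  simp only [dft3, dft_apply, smul_eq_mul]
  refine Finset.sum_congr rfl fun m _ ↦ ?_
  have hlift : -(m * k) = Int.cast (-(m.val * k.val : ℤ)) := by push_cast; simp
  rw [mul_comm, hlift, stdAddChar_coe]
  congr 2
  push_cast
  ring

noncomputable def fourierSlice (A : Fin n₁ → Fin n₂ → ZMod n₃ → ℂ) (k : ZMod n₃) :
    Matrix (Fin n₁) (Fin n₂) ℂ :=
  Matrix.of fun i j => dft3 A i j k

theorem fourierSlice_bijective :
    Function.Bijective (fourierSlice : (Fin n₁ → Fin n₂ → ZMod n₃ → ℂ) → _) := by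
  constructor
  · intro A B h
    ext i j : 2
    apply dft.injective
    rw [← dft3_apply, ← dft3_apply]
    ext k
    exact congr_fun₂ (congr_fun h k) i j
  · intro P
    refine ⟨fun i j ↦ 𝓕⁻ fun k ↦ P k i j, funext fun k ↦ ?_⟩
    ext i j
    simp only [fourierSlice, of_apply, dft3_apply, LinearEquiv.apply_symm_apply]

theorem fourierSlice_tProd3 (X : Fin n₁ → Fin r → ZMod n₃ → ℂ) (Y : Fin r → Fin n₂ → ZMod n₃ → ℂ)
    (k : ZMod n₃) : fourierSlice (tProd3 X Y) k = fourierSlice X k * fourierSlice Y k := by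
  ext i j
  have htube : tProd3 X Y i j = ∑ l, fun s ↦ ∑ m, X i l m * Y l j (s - m) := by
    ext s
    simp only [tProd3, Finset.sum_apply]
  simp only [fourierSlice, of_apply, mul_apply, dft3_apply, htube, map_sum, Finset.sum_apply,
    dft_convolution]

end Fourier

theorem tprod_factorization_iff_rank_general {n₁ n₂ r n₃ : ℕ}
    [NeZero n₃]
    (A : Fin n₁ → Fin n₂ → ZMod n₃ → ℂ) :
    (∃ (X : Fin n₁ → Fin r → ZMod n₃ → ℂ) (Y : Fin r → Fin n₂ → ZMod n₃ → ℂ),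
        A = tProd3 X Y) ↔
      ∀ k : ZMod n₃,
        (Matrix.of fun i j => dft3 A i j k : Matrix (Fin n₁) (Fin n₂) ℂ).rank ≤ r := by
  change _ ↔ ∀ k, (fourierSlice A k).rank ≤ r
  simp only [rank_le_iff_exists_mul_eq]
  constructor
  · rintro ⟨X, Y, rfl⟩ k
    exact ⟨_, _, (fourierSlice_tProd3 X Y k).symm⟩
  · intro h
    choose P Q hPQ using h
    obtain ⟨X, hX⟩ := fourierSlice_bijective.2 P
    obtain ⟨Y, hY⟩ := fourierSlice_bijective.2 Q
    refine ⟨X, Y, fourierSlice_bijective.1 (funext fun k ↦ ?_)⟩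
    rw [fourierSlice_tProd3, hX, hY, hPQ]

/-- A tensor admits a t-product factorization with inner tubal dimension `r` iff
every Fourier-domain frontal slice has rank at most `r`. -/
theorem tprod_factorization_iff_rank {n₁ n₂ r n₃ : ℕ}
    (hn₁ : 1 ≤ n₁) (hn₂ : 1 ≤ n₂) (hr : 1 ≤ r) [NeZero n₃]
    (A : Fin n₁ → Fin n₂ → ZMod n₃ → ℂ) :
    (∃ (X : Fin n₁ → Fin r → ZMod n₃ → ℂ) (Y : Fin r → Fin n₂ → ZMod n₃ → ℂ),
        A = tProd3 X Y) ↔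
      ∀ k : ZMod n₃,
        (Matrix.of fun i j => dft3 A i j k : Matrix (Fin n₁) (Fin n₂) ℂ).rank ≤ r :=
  tprod_factorization_iff_rank_general A
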